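/- arXiv:2408.03890 — 4 statements merged into one kernel-verified Lean document; each statement's English description precedes it below -/
import Mathlib

section
/- The intrinsic volumes of hyperbolic balls satisfy V_j(B_r) = ω_d cosh^{d-1-j}(r) sinh^j(r) for j ∈ {0,…,d-1}. Equivalently: if ω_d ∫_0^{r+s} sinh^{d-1}(t) dt = v_d(r) + Σ_{j=0}^{d-1} l_{d,j}(s) v_j(r) holds for all r,s ≥ 0, where v_d(r) = ω_d ∫_0^r sinh^{d-1}(t) dt, then v_j(r) = ω_d cosh^{d-1-j}(r) sinh^j(r) for each j ∈ {0,…,d-1}. -/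
/-!
Expanding `sinh (r + t) ^ n = (sinh r cosh t + cosh r sinh t) ^ n` binomially and integrating
over `t ∈ [0, s]` shows that `v_j(r) = ω cosh^{n-j}(r) sinh^j(r)` (with `n = d - 1`) satisfies
the Steiner identity. Any other solution differs from it by coefficients `c_j` with
`∑_j l_{d,j}(s) c_j = 0` for all `s ≥ 0`. Differentiating in `s` and dividing by `cosh^n s`
turns this into the vanishing of the polynomial `∑_j C(n,j) c_j X^{n-j}` at every `tanh s`,
`s > 0`, i.e. at infinitely many points, so all `c_j` vanish.
-/

open Real Polynomial

/-- The paper's `l_{n+1,j}`. -/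
noncomputable def steinerCoeff (n j : ℕ) (s : ℝ) : ℝ :=
  n.choose j * ∫ t in (0:ℝ)..s, cosh t ^ j * sinh t ^ (n - j)

lemma sinh_add_pow (n : ℕ) (r t : ℝ) :
    sinh (r + t) ^ n = ∑ j : Fin (n + 1),
      n.choose j * (cosh t ^ (j : ℕ) * sinh t ^ (n - j)) * (cosh r ^ (n - j) * sinh r ^ (j : ℕ)) := by
  rw [sinh_add, add_pow, ← Fin.sum_univ_eq_sum_range]
  exact Finset.sum_congr rfl fun j _ => by ring

lemma integral_sinh_pow_add (n : ℕ) (r s : ℝ) :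
    ∫ t in (0:ℝ)..(r + s), sinh t ^ n =
      (∫ t in (0:ℝ)..r, sinh t ^ n) +
        ∑ j : Fin (n + 1), steinerCoeff n j s * (cosh r ^ (n - j) * sinh r ^ (j : ℕ)) := by
  have hcont : Continuous fun t => sinh t ^ n := by fun_prop
  rw [← intervalIntegral.integral_add_adjacent_intervals (hcont.intervalIntegrable 0 r)
    (hcont.intervalIntegrable r (r + s))]
  congr 1
  have hshift : ∫ t in r..(r + s), sinh t ^ n = ∫ t in (0:ℝ)..s, sinh (r + t) ^ n := by
    simp [intervalIntegral.integral_comp_add_left (fun t => sinh t ^ n) r]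
  simp only [hshift, sinh_add_pow, steinerCoeff]
  rw [intervalIntegral.integral_finsetSum fun j _ => by
    apply Continuous.intervalIntegrable; fun_prop]
  refine Finset.sum_congr rfl fun j _ => ?_
  rw [intervalIntegral.integral_mul_const, intervalIntegral.integral_const_mul]

lemma hasDerivAt_steinerCoeff (n j : ℕ) (s : ℝ) :
    HasDerivAt (steinerCoeff n j) (n.choose j * (cosh s ^ j * sinh s ^ (n - j))) s := by
  have hcont : Continuous fun t => cosh t ^ j * sinh t ^ (n - j) := by fun_prop
  exact (intervalIntegral.integral_hasDerivAt_right (hcont.intervalIntegrable _ _)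
    (hcont.stronglyMeasurableAtFilter _ _) hcont.continuousAt).const_mul _

lemma eval_tanh_mul_cosh_pow (n : ℕ) (a : Fin (n + 1) → ℝ) (s : ℝ) :
    (∑ j : Fin (n + 1), monomial (n - j) (a j)).eval (tanh s) * cosh s ^ n =
      ∑ j : Fin (n + 1), a j * (cosh s ^ (j : ℕ) * sinh s ^ (n - j)) := by
  simp only [eval_finsetSum, eval_monomial, Finset.sum_mul]
  refine Finset.sum_congr rfl fun j _ => ?_
  have hsplit : cosh s ^ n = cosh s ^ (n - j) * cosh s ^ (j : ℕ) := by
    rw [← pow_add, Nat.sub_add_cancel (Nat.lt_succ_iff.mp j.isLt)]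
  rw [tanh_eq_sinh_div_cosh, div_pow, hsplit]
  field_simp

lemma eq_zero_of_sum_cosh_pow_mul_sinh_pow_eq_zero (n : ℕ) (a : Fin (n + 1) → ℝ)
    (ha : ∀ s > 0, ∑ j : Fin (n + 1), a j * (cosh s ^ (j : ℕ) * sinh s ^ (n - j)) = 0) :
    a = 0 := by
  set P := ∑ j : Fin (n + 1), monomial (n - j) (a j)
  have hroot : ∀ s > 0, P.IsRoot (tanh s) := fun s hs =>
    (mul_eq_zero.1 ((eval_tanh_mul_cosh_pow n a s).trans (ha s hs))).resolve_right
      (pow_pos (cosh_pos s) n).ne'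
  have hP : P = 0 := eq_zero_of_infinite_isRoot P <|
    ((Set.Ioi_infinite 0).image tanh_injective.injOn).mono <| by
      rintro _ ⟨s, hs, rfl⟩; exact hroot s hs
  funext i
  have hcoeff : P.coeff (n - i) = a i := by
    rw [finsetSum_coeff, Finset.sum_eq_single i]
    · simp
    · intro j _ hji
      rw [coeff_monomial, if_neg]
      omega
    · simp
  simpa [hP] using hcoeff.symm

lemma eq_zero_of_sum_steinerCoeff_mul_eq_zero (n : ℕ) (c : Fin (n + 1) → ℝ)
    (hc : ∀ s ≥ 0, ∑ j : Fin (n + 1), steinerCoeff n j s * c j = 0) :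
    c = 0 := by
  have hderiv : ∀ s > 0,
      ∑ j : Fin (n + 1), (n.choose j * c j) * (cosh s ^ (j : ℕ) * sinh s ^ (n - j)) = 0 := by
    intro s hs
    have hsum : HasDerivAt (fun s => ∑ j : Fin (n + 1), steinerCoeff n j s * c j)
        (∑ j : Fin (n + 1), n.choose j * (cosh s ^ (j : ℕ) * sinh s ^ (n - j)) * c j) s :=
      HasDerivAt.fun_sum fun j _ => (hasDerivAt_steinerCoeff n j s).mul_const (c j)
    have hzero : (fun s => ∑ j : Fin (n + 1), steinerCoeff n j s * c j) =ᶠ[nhds s] 0 :=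
      Filter.eventually_of_mem (Ioi_mem_nhds hs) fun x hx => hc x (le_of_lt hx)
    calc _ = deriv (fun s => ∑ j : Fin (n + 1), steinerCoeff n j s * c j) s := by
          rw [hsum.deriv]; exact Finset.sum_congr rfl fun j _ => mul_right_comm _ _ _
      _ = 0 := by simp [hzero.deriv_eq]
  have hchoose := eq_zero_of_sum_cosh_pow_mul_sinh_pow_eq_zero n _ hderiv
  funext j
  have := congrFun hchoose j
  have hpos : (n.choose j : ℝ) ≠ 0 := by
    exact_mod_cast (Nat.choose_pos (Nat.lt_succ_iff.mp j.isLt)).ne'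
  simpa [hpos] using this

theorem intrinsic_volumes_of_balls_general (d : ℕ) (hd : 2 ≤ d) (ω : ℝ)
    (v : Fin d → ℝ → ℝ)
    (h : ∀ r s : ℝ, 0 ≤ r → 0 ≤ s →
      ω * ∫ t in (0:ℝ)..(r + s), Real.sinh t ^ (d - 1)
        = ω * (∫ t in (0:ℝ)..r, Real.sinh t ^ (d - 1))
          + ∑ j : Fin d, ((Nat.choose (d - 1) (j : ℕ) : ℝ) *
              ∫ t in (0:ℝ)..s, Real.cosh t ^ (j : ℕ) * Real.sinh t ^ (d - 1 - (j : ℕ))) * v j r) :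
    ∀ (j : Fin d) (r : ℝ), 0 ≤ r →
      v j r = ω * Real.cosh r ^ (d - 1 - (j : ℕ)) * Real.sinh r ^ (j : ℕ) := by
  obtain ⟨n, rfl⟩ : ∃ n, d = n + 1 := ⟨d - 1, by omega⟩
  simp only [Nat.add_sub_cancel] at h ⊢
  intro i r hr
  have hsteiner : ∀ s ≥ 0, ∑ j : Fin (n + 1), steinerCoeff n j s *
      (v j r - ω * cosh r ^ (n - j) * sinh r ^ (j : ℕ)) = 0 := by
    intro s hs
    have hvol : ω * ∑ j : Fin (n + 1), steinerCoeff n j s * (cosh r ^ (n - j) * sinh r ^ (j : ℕ)) =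
        ∑ j : Fin (n + 1), steinerCoeff n j s * v j r := by
      simpa [integral_sinh_pow_add, mul_add, steinerCoeff] using h r s hr hs
    calc _ = ∑ j : Fin (n + 1), steinerCoeff n j s * v j r -
          ω * ∑ j : Fin (n + 1), steinerCoeff n j s * (cosh r ^ (n - j) * sinh r ^ (j : ℕ)) := by
          rw [Finset.mul_sum, ← Finset.sum_sub_distrib]
          exact Finset.sum_congr rfl fun j _ => by ring
      _ = 0 := by rw [hvol, sub_self]
  have := congrFun (eq_zero_of_sum_steinerCoeff_mul_eq_zero n _ hsteiner) i
  simpa [sub_eq_zero] using this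

/-- If functions `v_0,…,v_{d-1}` satisfy the hyperbolic Steiner formula for balls,
`ω ∫_0^{r+s} sinh^{d-1} = ω ∫_0^r sinh^{d-1} + Σ_j l_{d,j}(s) v_j(r)` for all `r,s ≥ 0`,
then `v_j(r) = ω cosh^{d-1-j}(r) sinh^j(r)` for all `j ∈ {0,…,d-1}` and `r ≥ 0`. -/
theorem intrinsic_volumes_of_balls (d : ℕ) (hd : 2 ≤ d) (ω : ℝ) (hω : 0 < ω)
    (v : Fin d → ℝ → ℝ)
    (h : ∀ r s : ℝ, 0 ≤ r → 0 ≤ s →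
      ω * ∫ t in (0:ℝ)..(r + s), Real.sinh t ^ (d - 1)
        = ω * (∫ t in (0:ℝ)..r, Real.sinh t ^ (d - 1))
          + ∑ j : Fin d, ((Nat.choose (d - 1) (j : ℕ) : ℝ) *
              ∫ t in (0:ℝ)..s, Real.cosh t ^ (j : ℕ) * Real.sinh t ^ (d - 1 - (j : ℕ))) * v j r) :
    ∀ (j : Fin d) (r : ℝ), 0 ≤ r →
      v j r = ω * Real.cosh r ^ (d - 1 - (j : ℕ)) * Real.sinh r ^ (j : ℕ) :=
  intrinsic_volumes_of_balls_general d hd ω v h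
end

section
/- For the half-space model metric d_H(x,y) = 2 arsinh(‖x−y‖ / (2√(x_d y_d))) on the upper half-space H^d = ℝ^{d-1} × (0,∞): for all z ∈ ℝ^{d-1} and u > 0, the box C^{d-1}(z, a u) × [7u/8, u] is contained in the metric ball B_{H^d}((z,u), 1/2), where a = √((1/(d-1))·(7 sinh(1/4)²/2 − 1/64)) and C^{d-1}(z,s) = ∏_{i=1}^{d-1} [z_i − s, z_i + s]. -/
/-! The box has Euclidean radius `√(d-1) · a u` horizontally and `u/8` vertically, so its squared
Euclidean distance to `(z,u)` is at most `(7 sinh(1/4)²/2) u²`, while `4 sinh(1/4)² x_d u` is at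
least that much because `x_d ≥ 7u/8`. Since `d_H(x,y) ≤ r` as soon as
`‖x − y‖² ≤ (2 sinh(r/2))² x_d y_d`, this places the box in the ball of radius `1/2`. -/

open Real

/-- The distance of the Poincaré half-space model on `ℝ^{d-1} × (0,∞)`:
`d_H(x,y) = 2 arsinh(‖x−y‖ / (2√(x_d y_d)))`. -/
noncomputable def halfSpaceDist {n : ℕ} (x y : EuclideanSpace ℝ (Fin n) × ℝ) : ℝ :=
  2 * Real.arsinh (Real.sqrt (‖x.1 - y.1‖ ^ 2 + (x.2 - y.2) ^ 2) / (2 * Real.sqrt (x.2 * y.2)))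

theorem EuclideanSpace.norm_sq_le_card_mul_sq {𝕜 ι : Type*} [RCLike 𝕜] [Fintype ι]
    (v : EuclideanSpace 𝕜 ι) {r : ℝ} (hv : ∀ i, ‖v i‖ ≤ r) :
    ‖v‖ ^ 2 ≤ Fintype.card ι * r ^ 2 := by
  rw [EuclideanSpace.norm_sq_eq, ← nsmul_eq_mul, ← Finset.card_univ, ← Finset.sum_const]
  exact Finset.sum_le_sum fun i _ => pow_le_pow_left₀ (norm_nonneg _) (hv i) 2

theorem halfSpaceDist_le_of_sq_le {n : ℕ} {x y : EuclideanSpace ℝ (Fin n) × ℝ} {r : ℝ}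
    (hr : 0 ≤ r)
    (h : ‖x.1 - y.1‖ ^ 2 + (x.2 - y.2) ^ 2 ≤ (2 * sinh (r / 2)) ^ 2 * (x.2 * y.2)) :
    halfSpaceDist x y ≤ r := by
  have hsinh : 0 ≤ sinh (r / 2) := sinh_nonneg_iff.mpr (by positivity)
  have hratio : √(‖x.1 - y.1‖ ^ 2 + (x.2 - y.2) ^ 2) / (2 * √(x.2 * y.2)) ≤ sinh (r / 2) := by
    refine div_le_of_le_mul₀ (by positivity) hsinh ?_
    calc √(‖x.1 - y.1‖ ^ 2 + (x.2 - y.2) ^ 2)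
        ≤ √((2 * sinh (r / 2)) ^ 2 * (x.2 * y.2)) := sqrt_le_sqrt h
      _ = sinh (r / 2) * (2 * √(x.2 * y.2)) := by
        rw [sqrt_mul (sq_nonneg _), sqrt_sq (by positivity)]
        ring
  unfold halfSpaceDist
  have := arsinh_le_arsinh.mpr hratio
  rw [arsinh_sinh] at this
  linarith

theorem box_subset_halfSpace_ball_general (d : ℕ) (hd : 2 ≤ d)
    (z : EuclideanSpace ℝ (Fin (d - 1))) (u : ℝ)
    (a : ℝ) (ha : a = Real.sqrt ((1 / ((d : ℝ) - 1)) * (7 * Real.sinh (1/4) ^ 2 / 2 - 1/64)))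
    (x : EuclideanSpace ℝ (Fin (d - 1)) × ℝ)
    (hx1 : ∀ i, |x.1 i - z i| ≤ a * u)
    (hx2 : 7 * u / 8 ≤ x.2) (hx3 : x.2 ≤ u) :
    halfSpaceDist x (z, u) ≤ 1 / 2 := by
  set s := sinh (1 / 4)
  have hs : 1 / 4 ≤ s := self_le_sinh_iff.mpr (by norm_num)
  have hd1 : ((d - 1 : ℕ) : ℝ) = (d : ℝ) - 1 := by push_cast [Nat.cast_sub (by omega : 1 ≤ d)]; ring
  have ha2 : ((d : ℝ) - 1) * a ^ 2 = 7 * s ^ 2 / 2 - 1 / 64 := by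
    have hd_pos : (1 : ℝ) ≤ (d : ℝ) - 1 := by rw [← hd1]; exact_mod_cast (by omega : 1 ≤ d - 1)
    rw [ha, sq_sqrt (mul_nonneg (by positivity) (by nlinarith))]
    field_simp
  have hnorm : ‖x.1 - z‖ ^ 2 ≤ ((d : ℝ) - 1) * (a * u) ^ 2 := by
    simpa [hd1] using EuclideanSpace.norm_sq_le_card_mul_sq (x.1 - z) (r := a * u) fun i => by
      simpa [Real.norm_eq_abs] using hx1 i
  have hbox : ‖x.1 - z‖ ^ 2 + (x.2 - u) ^ 2 ≤ 7 * s ^ 2 / 2 * u ^ 2 := by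
    have hvert : (x.2 - u) ^ 2 ≤ (u / 8) ^ 2 := by nlinarith
    nlinarith
  refine halfSpaceDist_le_of_sq_le (by norm_num) (hbox.trans ?_)
  rw [show (1 : ℝ) / 2 / 2 = 1 / 4 by norm_num]
  nlinarith [mul_le_mul_of_nonneg_left hx2 (by nlinarith : 0 ≤ 4 * s ^ 2 * u)]

/-- For all `z ∈ ℝ^{d-1}` and `u > 0`, the box `C^{d-1}(z, a u) × [7u/8, u]` is contained in
the half-space-model ball `B_{H^d}((z,u), 1/2)`, where
`a = √((1/(d-1))·(7 sinh(1/4)²/2 − 1/64))`. -/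
theorem box_subset_halfSpace_ball (d : ℕ) (hd : 2 ≤ d)
    (z : EuclideanSpace ℝ (Fin (d - 1))) (u : ℝ) (hu : 0 < u)
    (a : ℝ) (ha : a = Real.sqrt ((1 / ((d : ℝ) - 1)) * (7 * Real.sinh (1/4) ^ 2 / 2 - 1/64)))
    (x : EuclideanSpace ℝ (Fin (d - 1)) × ℝ)
    (hx1 : ∀ i, |x.1 i - z i| ≤ a * u)
    (hx2 : 7 * u / 8 ≤ x.2) (hx3 : x.2 ≤ u) :
    halfSpaceDist x (z, u) ≤ 1 / 2 :=
  box_subset_halfSpace_ball_general d hd z u a ha x hx1 hx2 hx3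
end

section
/- In the half-space model, the countable family of balls B_{H^d}((7/8)^ℓ (2ak, 1), 1/2), indexed by k ∈ ℤ^{d-1} and ℓ ∈ ℤ, covers all of H^d, where a = √((1/(d-1))·(7 sinh(1/4)²/2 − 1/64)). -/
open Real

/-!
Put `t = (7/8)^ℓ` with `t ≤ y_d < 8t/7`. Rounding each horizontal coordinate of `y` to the grid
`2at ℤ` moves it by at most `at`, so the horizontal offset `h` satisfies
`h² ≤ (d-1) a² t² = (7 sinh(1/4)²/2 - 1/64) t²`, while the vertical offset is below `t/7`.
Since `sinh(1/4) ≥ 1/4`, this gives `h² + (y_d - t)² ≤ 4 t² sinh(1/4)² ≤ 4 y_d t sinh(1/4)²`,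
which is exactly `d_H ≤ 2 · (1/4)`.
-/

theorem halfSpaceDist_le_two_mul_of_sq_le {n : ℕ} {x y : EuclideanSpace ℝ (Fin n) × ℝ} {r : ℝ}
    (hx : 0 < x.2) (hy : 0 < y.2) (hr : 0 ≤ r)
    (h : ‖x.1 - y.1‖ ^ 2 + (x.2 - y.2) ^ 2 ≤ 4 * (x.2 * y.2) * sinh r ^ 2) :
    halfSpaceDist x y ≤ 2 * r := by
  have hsqrt : √(‖x.1 - y.1‖ ^ 2 + (x.2 - y.2) ^ 2) ≤ 2 * √(x.2 * y.2) * sinh r := by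
    rw [sqrt_le_iff, mul_pow, mul_pow, sq_sqrt (mul_pos hx hy).le]
    exact ⟨by have := sinh_nonneg_iff.2 hr; positivity, by linarith⟩
  have harsinh : arsinh (√(‖x.1 - y.1‖ ^ 2 + (x.2 - y.2) ^ 2) / (2 * √(x.2 * y.2))) ≤ r := by
    rw [← arsinh_sinh r]
    exact arsinh_le_arsinh.2 ((div_le_iff₀ (by positivity)).2 (by linarith))
  unfold halfSpaceDist
  linarith

theorem exists_int_norm_sub_sq_le {n : ℕ} (v : EuclideanSpace ℝ (Fin n)) {s : ℝ} (hs : 0 < s) :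
    ∃ k : Fin n → ℤ, ‖v - WithLp.toLp 2 (fun i => s * k i)‖ ^ 2 ≤ n * (s / 2) ^ 2 := by
  refine ⟨fun i => round (v i / s), ?_⟩
  have hcoord : ∀ i, |v i - s * round (v i / s)| ≤ s / 2 := fun i =>
    calc |v i - s * round (v i / s)| = |s * (v i / s - round (v i / s))| := by
          rw [mul_sub, mul_div_cancel₀ _ hs.ne']
      _ = s * |v i / s - round (v i / s)| := by rw [abs_mul, abs_of_pos hs]
      _ ≤ s * (1 / 2) := by gcongr; exact abs_sub_round _
      _ = s / 2 := by ring
  rw [EuclideanSpace.norm_sq_eq]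
  calc ∑ i, ‖(v - WithLp.toLp 2 (fun i => s * (round (v i / s) : ℝ))) i‖ ^ 2
      ≤ ∑ _i : Fin n, (s / 2) ^ 2 := Finset.sum_le_sum fun i _ => by
        simpa [Real.norm_eq_abs, sq_abs] using pow_le_pow_left₀ (abs_nonneg _) (hcoord i) 2
    _ = n * (s / 2) ^ 2 := by simp

theorem halfSpaceDist_le_half_of_height_mem_Ico {n : ℕ} {x : EuclideanSpace ℝ (Fin n) × ℝ}
    {c : EuclideanSpace ℝ (Fin n)} {t : ℝ} (ht : 0 < t) (hlow : t ≤ x.2) (hup : x.2 < 8 / 7 * t)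
    (hc : ‖x.1 - c‖ ^ 2 ≤ (7 * sinh (1 / 4) ^ 2 / 2 - 1 / 64) * t ^ 2) :
    halfSpaceDist x (c, t) ≤ 1 / 2 := by
  have hS : 1 / 4 ≤ sinh (1 / 4) := (self_lt_sinh_iff.2 (by norm_num)).le
  have hS2 : 1 / 16 * t ^ 2 ≤ sinh (1 / 4) ^ 2 * t ^ 2 := by gcongr; nlinarith
  have hvert : (x.2 - t) ^ 2 ≤ t ^ 2 / 49 := by nlinarith
  have hgrow : 0 ≤ t * sinh (1 / 4) ^ 2 * (x.2 - t) := by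
    have := sub_nonneg.2 hlow; positivity
  have := halfSpaceDist_le_two_mul_of_sq_le (x := x) (y := (c, t)) (r := 1 / 4)
    (by linarith) ht (by norm_num) (by dsimp only; nlinarith)
  linarith

/-- The balls `B_{H^d}((7/8)^ℓ (2ak, 1), 1/2)`, `k ∈ ℤ^{d-1}`, `ℓ ∈ ℤ`, cover the
half-space `H^d = ℝ^{d-1} × (0,∞)`, where `a = √((1/(d-1))·(7 sinh(1/4)²/2 − 1/64))`. -/
theorem halfSpace_ball_cover (d : ℕ) (hd : 2 ≤ d)
    (a : ℝ) (ha : a = Real.sqrt ((1 / ((d : ℝ) - 1)) * (7 * Real.sinh (1/4) ^ 2 / 2 - 1/64)))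
    (y : EuclideanSpace ℝ (Fin (d - 1)) × ℝ) (hy : 0 < y.2) :
    ∃ (k : Fin (d - 1) → ℤ) (ℓ : ℤ),
      halfSpaceDist y
        ((WithLp.toLp 2 (fun i => ((7:ℝ)/8) ^ ℓ * (2 * a * (k i))) : EuclideanSpace ℝ (Fin (d - 1))),
          ((7:ℝ)/8) ^ ℓ) ≤ 1 / 2 := by
  obtain ⟨m, hlow, hup⟩ := exists_mem_Ico_zpow hy (by norm_num : (1 : ℝ) < 8 / 7)
  set t : ℝ := (8 / 7 : ℝ) ^ m
  have ht : 0 < t := by positivity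
  have hdim : ((d - 1 : ℕ) : ℝ) = (d : ℝ) - 1 := by rw [Nat.cast_sub (by omega), Nat.cast_one]
  have hdim_pos : 0 < (d : ℝ) - 1 := by rw [← hdim]; exact_mod_cast (by omega : 0 < d - 1)
  have hK : 0 < 7 * sinh (1 / 4) ^ 2 / 2 - 1 / 64 := by
    nlinarith [(self_lt_sinh_iff.2 (by norm_num : (0 : ℝ) < 1 / 4)).le]
  have hK_pos : 0 < 1 / ((d : ℝ) - 1) * (7 * sinh (1 / 4) ^ 2 / 2 - 1 / 64) := by positivity
  have hapos : 0 < a := ha ▸ sqrt_pos.2 hK_pos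
  have ha2 : ((d - 1 : ℕ) : ℝ) * a ^ 2 = 7 * sinh (1 / 4) ^ 2 / 2 - 1 / 64 := by
    rw [ha, sq_sqrt hK_pos.le, hdim]; field_simp
  obtain ⟨k, hk⟩ := exists_int_norm_sub_sq_le y.1 (s := 2 * a * t) (by positivity)
  refine ⟨k, -m, ?_⟩
  have hcenter : (7 / 8 : ℝ) ^ (-m) = t := by rw [zpow_neg, ← inv_zpow, inv_div]
  simp only [hcenter]
  refine halfSpaceDist_le_half_of_height_mem_Ico ht hlow
    (by rwa [zpow_add_one₀ (by norm_num), mul_comm] at hup) ?_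
  calc _ = ‖y.1 - WithLp.toLp 2 (fun i => 2 * a * t * (k i : ℝ))‖ ^ 2 := by
        congr 4; ext i; ring
    _ ≤ ((d - 1 : ℕ) : ℝ) * (2 * a * t / 2) ^ 2 := hk
    _ = _ := by rw [← ha2]; ring
end

section
/- In the half-space model there is a uniform multiplicity bound: there exists N_0 ∈ ℕ such that for every y ∈ H^d, the number of pairs (k, ℓ) ∈ ℤ^{d-1} × ℤ with y ∈ B_{H^d}((7/8)^ℓ (2ak, 1), 1/2) is at most N_0, where a = √((1/(d-1))·(7 sinh(1/4)²/2 − 1/64)). -/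
/-!
If `d_H(y, c) ≤ 1/2` then `‖y' - c'‖² + (y_d - c_d)² ≤ y_d c_d / 2`, since `4 sinh(1/4)² ≤ 1/2`.
The vertical part forces `c_d / y_d ∈ [1/2, 2]`, and then the horizontal part gives
`‖y' - c'‖ ≤ c_d`. For the centres `q^ℓ (b k, 1)` the first condition pins `ℓ` to a window of
bounded length around `log y_d / log q`, and for each such `ℓ` the second pins every `k_i` to a
window of length about `1 / |b|` around `y_i / (b q^ℓ)`. Shifting by the floors of the window
centres maps the set of admissible `(k, ℓ)` injectively into one fixed finite box.
-/

open Real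

open Set

theorem le_two_mul_of_sq_sub_le_mul_div_two {𝕜 : Type*} [Field 𝕜] [LinearOrder 𝕜]
    [IsStrictOrderedRing 𝕜] {x y : 𝕜} (hy : 0 ≤ y) (h : (x - y) ^ 2 ≤ x * y / 2) :
    x ≤ 2 * y := by
  -- `2 (x - y)² - x y = (2 x - y) (x - 2 y)`
  nlinarith

theorem Int.sub_floor_mem_Icc_of_abs_sub_le {t : ℤ} {u M : ℝ} (h : |(t : ℝ) - u| ≤ M) :
    t - ⌊u⌋ ∈ Finset.Icc (-⌈M⌉) (⌈M⌉ + 1) := by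
  rw [abs_le] at h
  have hfloor_le := Int.floor_le u
  have hlt_floor := Int.lt_floor_add_one u
  have hle_ceil := Int.le_ceil M
  rw [Finset.mem_Icc]
  constructor
  · exact_mod_cast (by push_cast; linarith : ((-⌈M⌉ : ℤ) : ℝ) ≤ ((t - ⌊u⌋ : ℤ) : ℝ))
  · exact_mod_cast (by push_cast; linarith : ((t - ⌊u⌋ : ℤ) : ℝ) ≤ ((⌈M⌉ + 1 : ℤ) : ℝ))

theorem Real.sinh_one_fourth_sq_le : sinh (1 / 4) ^ 2 ≤ 1 / 8 := by
  have hexp : exp (1 / 4) ≤ 4 / 3 := by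
    have := exp_bound_div_one_sub_of_interval (x := 1 / 4) (by norm_num) (by norm_num)
    norm_num at this ⊢
    exact this
  have hexp_neg : 3 / 4 ≤ exp (-(1 / 4)) := by linarith [add_one_le_exp (-(1 / 4))]
  have hsinh : sinh (1 / 4) ≤ 7 / 24 := by rw [sinh_eq]; linarith
  nlinarith [sinh_nonneg_iff.2 (by norm_num : (0 : ℝ) ≤ 1 / 4)]

theorem Real.abs_log_sub_log_le_log_two {x y : ℝ} (hx : 0 < x) (hy : 0 < y)
    (hxy : x ≤ 2 * y) (hyx : y ≤ 2 * x) : |log x - log y| ≤ log 2 := by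
  have hx' := log_le_log hx hxy
  have hy' := log_le_log hy hyx
  rw [log_mul two_ne_zero hy.ne'] at hx'
  rw [log_mul two_ne_zero hx.ne'] at hy'
  exact abs_le.2 ⟨by linarith, by linarith⟩

section HalfSpace

variable {n : ℕ} {x c : EuclideanSpace ℝ (Fin n) × ℝ}

theorem sq_norm_add_sq_le_of_halfSpaceDist_le {r : ℝ} (hxc : 0 < x.2 * c.2)
    (h : halfSpaceDist x c ≤ 2 * r) :
    ‖x.1 - c.1‖ ^ 2 + (x.2 - c.2) ^ 2 ≤ 4 * sinh r ^ 2 * (x.2 * c.2) := by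
  set X := ‖x.1 - c.1‖ ^ 2 + (x.2 - c.2) ^ 2
  have hquot : √X / (2 * √(x.2 * c.2)) ≤ sinh r := by
    have harsinh : arsinh (√X / (2 * √(x.2 * c.2))) ≤ r := by
      unfold halfSpaceDist at h
      linarith
    simpa only [sinh_arsinh] using sinh_le_sinh.2 harsinh
  have hsqrt : √X ≤ 2 * sinh r * √(x.2 * c.2) := by
    rw [div_le_iff₀ (by positivity)] at hquot
    linarith
  calc X = √X ^ 2 := (sq_sqrt (by positivity)).symm
    _ ≤ (2 * sinh r * √(x.2 * c.2)) ^ 2 := pow_le_pow_left₀ (sqrt_nonneg X) hsqrt 2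
    _ = 4 * sinh r ^ 2 * (x.2 * c.2) := by rw [mul_pow, mul_pow, sq_sqrt hxc.le]; ring

theorem sq_norm_add_sq_le_of_halfSpaceDist_le_half (hxc : 0 < x.2 * c.2)
    (h : halfSpaceDist x c ≤ 1 / 2) :
    ‖x.1 - c.1‖ ^ 2 + (x.2 - c.2) ^ 2 ≤ x.2 * c.2 / 2 := by
  have := sq_norm_add_sq_le_of_halfSpaceDist_le (r := 1 / 4) hxc (by linarith)
  nlinarith [sinh_one_fourth_sq_le]

theorem le_two_mul_of_halfSpaceDist_le_half (hx : 0 < x.2) (hc : 0 < c.2)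
    (h : halfSpaceDist x c ≤ 1 / 2) : x.2 ≤ 2 * c.2 ∧ c.2 ≤ 2 * x.2 := by
  have hsq := sq_norm_add_sq_le_of_halfSpaceDist_le_half (mul_pos hx hc) h
  have hvert : (x.2 - c.2) ^ 2 ≤ x.2 * c.2 / 2 := by nlinarith [sq_nonneg ‖x.1 - c.1‖]
  refine ⟨le_two_mul_of_sq_sub_le_mul_div_two hc.le hvert,
    le_two_mul_of_sq_sub_le_mul_div_two hx.le (by nlinarith [hvert])⟩

theorem norm_sub_le_of_halfSpaceDist_le_half (hx : 0 < x.2) (hc : 0 < c.2)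
    (h : halfSpaceDist x c ≤ 1 / 2) : ‖x.1 - c.1‖ ≤ c.2 := by
  have hsq := sq_norm_add_sq_le_of_halfSpaceDist_le_half (mul_pos hx hc) h
  have hx2 := (le_two_mul_of_halfSpaceDist_le_half hx hc h).1
  have hnorm_sq : ‖x.1 - c.1‖ ^ 2 ≤ c.2 ^ 2 := by nlinarith [sq_nonneg (x.2 - c.2)]
  exact (pow_le_pow_iff_left₀ (norm_nonneg _) hc.le two_ne_zero).1 hnorm_sq

noncomputable def gridCenter (q b : ℝ) (p : (Fin n → ℤ) × ℤ) : EuclideanSpace ℝ (Fin n) × ℝ :=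
  (WithLp.toLp 2 (fun i => q ^ p.2 * (b * p.1 i)), q ^ p.2)

variable {q b : ℝ} {y : EuclideanSpace ℝ (Fin n) × ℝ} {p : (Fin n → ℤ) × ℤ}

theorem abs_sub_log_div_log_le_of_halfSpaceDist_gridCenter_le_half (hq : 0 < q) (hq1 : q ≠ 1)
    (hy : 0 < y.2) (h : halfSpaceDist y (gridCenter q b p) ≤ 1 / 2) :
    |(p.2 : ℝ) - log y.2 / log q| ≤ log 2 / |log q| := by
  have hlogq : log q ≠ 0 := log_ne_zero_of_pos_of_ne_one hq hq1
  obtain ⟨hyc, hcy⟩ := le_two_mul_of_halfSpaceDist_le_half hy (zpow_pos hq p.2) h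
  rw [le_div_iff₀ (abs_pos.2 hlogq), ← abs_mul, sub_mul, div_mul_cancel₀ _ hlogq, ← log_zpow,
    abs_sub_comm]
  exact abs_log_sub_log_le_log_two hy (zpow_pos hq p.2) hyc hcy

theorem abs_sub_div_le_of_halfSpaceDist_gridCenter_le_half (hq : 0 < q) (hb : b ≠ 0)
    (hy : 0 < y.2) (h : halfSpaceDist y (gridCenter q b p) ≤ 1 / 2) (i : Fin n) :
    |(p.1 i : ℝ) - y.1 i / (b * q ^ p.2)| ≤ 1 / |b| := by
  have hqp : 0 < q ^ p.2 := zpow_pos hq p.2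
  have hcoord : |y.1 i - q ^ p.2 * (b * p.1 i)| ≤ q ^ p.2 := by
    have := (PiLp.norm_apply_le (y.1 - (gridCenter q b p).1) i).trans
      (norm_sub_le_of_halfSpaceDist_le_half hy hqp h)
    simpa [gridCenter, Real.norm_eq_abs] using this
  calc |(p.1 i : ℝ) - y.1 i / (b * q ^ p.2)|
        = |y.1 i - q ^ p.2 * (b * p.1 i)| / (|b| * q ^ p.2) := by
          rw [← abs_of_pos hqp, ← abs_mul, ← abs_div, abs_sub_comm, abs_of_pos hqp]
          congr 1
          field_simp
    _ ≤ q ^ p.2 / (|b| * q ^ p.2) := by gcongr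
    _ = 1 / |b| := by field_simp

theorem exists_ncard_le_of_halfSpaceDist_gridCenter_le_half (hq : 0 < q) (hq1 : q ≠ 1)
    (hb : b ≠ 0) :
    ∃ N : ℕ, ∀ y : EuclideanSpace ℝ (Fin n) × ℝ, 0 < y.2 →
      {p | halfSpaceDist y (gridCenter q b p) ≤ 1 / 2}.Finite ∧
      {p | halfSpaceDist y (gridCenter q b p) ≤ 1 / 2}.ncard ≤ N := by
  set Mk := 1 / |b|
  set Ml := log 2 / |log q|
  let T : Finset ((Fin n → ℤ) × ℤ) :=
    Fintype.piFinset (fun _ => Finset.Icc (-⌈Mk⌉) (⌈Mk⌉ + 1)) ×ˢ Finset.Icc (-⌈Ml⌉) (⌈Ml⌉ + 1)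
  refine ⟨T.card, fun y hy => ?_⟩
  set S := {p | halfSpaceDist y (gridCenter q b p) ≤ 1 / 2}
  let f : (Fin n → ℤ) × ℤ → (Fin n → ℤ) × ℤ := fun p =>
    (p.1 - fun i => ⌊y.1 i / (b * q ^ p.2)⌋, p.2 - ⌊log y.2 / log q⌋)
  have hf : InjOn f S := by
    intro p _ p' _ hpp'
    obtain ⟨hk, hl⟩ := Prod.ext_iff.1 hpp'
    have hl' : p.2 = p'.2 := sub_left_inj.1 hl
    simp only [f, hl'] at hk
    exact Prod.ext (sub_left_inj.1 hk) hl'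
  have hmaps : MapsTo f S T := fun p hp => Finset.mem_product.2
    ⟨Fintype.mem_piFinset.2 fun i => Int.sub_floor_mem_Icc_of_abs_sub_le
        (abs_sub_div_le_of_halfSpaceDist_gridCenter_le_half hq hb hy hp i),
      Int.sub_floor_mem_Icc_of_abs_sub_le
        (abs_sub_log_div_log_le_of_halfSpaceDist_gridCenter_le_half hq hq1 hy hp)⟩
  exact ⟨Finite.of_injOn hmaps hf T.finite_toSet,
    (ncard_le_ncard_of_injOn f hmaps hf T.finite_toSet).trans (ncard_coe_finset T).le⟩

end HalfSpace

/-- Uniform multiplicity bound: there is `N₀ ∈ ℕ` such that every point `y ∈ H^d` lies in at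
most `N₀` of the balls `B_{H^d}((7/8)^ℓ (2ak, 1), 1/2)`, `k ∈ ℤ^{d-1}`, `ℓ ∈ ℤ`, where
`a = √((1/(d-1))·(7 sinh(1/4)²/2 − 1/64))`. -/
theorem halfSpace_ball_bounded_multiplicity (d : ℕ) (hd : 2 ≤ d)
    (a : ℝ) (ha : a = Real.sqrt ((1 / ((d : ℝ) - 1)) * (7 * Real.sinh (1/4) ^ 2 / 2 - 1/64))) :
    ∃ N₀ : ℕ, ∀ y : EuclideanSpace ℝ (Fin (d - 1)) × ℝ, 0 < y.2 →
      (Set.Finite {p : (Fin (d - 1) → ℤ) × ℤ |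
          halfSpaceDist y
            ((WithLp.toLp 2 (fun i => ((7:ℝ)/8) ^ p.2 * (2 * a * (p.1 i))) : EuclideanSpace ℝ (Fin (d - 1))),
              ((7:ℝ)/8) ^ p.2) ≤ 1 / 2}) ∧
      {p : (Fin (d - 1) → ℤ) × ℤ |
          halfSpaceDist y
            ((WithLp.toLp 2 (fun i => ((7:ℝ)/8) ^ p.2 * (2 * a * (p.1 i))) : EuclideanSpace ℝ (Fin (d - 1))),
              ((7:ℝ)/8) ^ p.2) ≤ 1 / 2}.ncard ≤ N₀ := by
  have hd1 : (0 : ℝ) < 1 / ((d : ℝ) - 1) := by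
    have : (2 : ℝ) ≤ d := by exact_mod_cast hd
    exact one_div_pos.2 (by linarith)
  have hsinh : (0 : ℝ) < 7 * sinh (1 / 4) ^ 2 / 2 - 1 / 64 := by
    nlinarith [self_lt_sinh_iff.2 (by norm_num : (0 : ℝ) < 1 / 4)]
  have ha0 : 0 < a := ha ▸ sqrt_pos.2 (mul_pos hd1 hsinh)
  exact exists_ncard_le_of_halfSpaceDist_gridCenter_le_half (q := 7 / 8) (b := 2 * a)
    (by norm_num) (by norm_num) (by positivity)
end
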